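/- Define E[a_1,...,a_r] := Σ over (x_1,...,x_r) ∈ (F_2^n)^r of E[f̃(x_1)f̃(x_1+a_1)···f̃(x_r)f̃(x_r+a_r)], where f is a uniformly random Boolean function and f̃ = (-1)^f. Then for any nonzero a ∈ F_2^n and any a_1,...,a_r ∈ F_2^n: E[a, a_1, ..., a_r] ≤ 2 Σ_{i=1}^{r} E[a_1, ..., a_i + a, ..., a_r]. -/

import Mathlib

open Finset

noncomputable def ev (n : ℕ) (X : ((Fin n → ZMod 2) → ZMod 2) → ℝ) : ℝ :=
  (∑ f : (Fin n → ZMod 2) → ZMod 2, X f) / Fintype.card ((Fin n → ZMod 2) → ZMod 2)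

/-- `E[a_1,…,a_r] = Σ_{x_1,…,x_r} E[f̃(x_1)f̃(x_1+a_1)⋯f̃(x_r)f̃(x_r+a_r)]`. -/
noncomputable def Efun (n : ℕ) {r : ℕ} (a : Fin r → (Fin n → ZMod 2)) : ℝ :=
  ∑ x : Fin r → (Fin n → ZMod 2),
    ev n (fun f => ∏ i, (-1 : ℝ) ^ (f (x i)).val * (-1 : ℝ) ^ (f (x i + a i)).val)


def χ (v : ZMod 2) : ℝ := (-1) ^ v.val

lemma chi_zero : χ 0 = 1 := rfl

lemma chi_add (u v : ZMod 2) : χ (u + v) = χ u * χ v := by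
  have h : ∀ w : ZMod 2, w = 0 ∨ w = 1 := by decide
  rcases h u with rfl | rfl <;> rcases h v with rfl | rfl <;> norm_num [χ, show ((2:ZMod 2)).val = 0 from rfl, show ((1:ZMod 2)).val = 1 from rfl]

lemma chi_ne (v : ZMod 2) : χ (v + 1) = - χ v := by
  have h : ∀ w : ZMod 2, w = 0 ∨ w = 1 := by decide
  rcases h v with rfl | rfl <;> norm_num [χ, show ((2:ZMod 2)).val = 0 from rfl, show ((1:ZMod 2)).val = 1 from rfl]

lemma chi_sum {ι : Type*} (s : Finset ι) (g : ι → ZMod 2) :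
    χ (∑ i ∈ s, g i) = ∏ i ∈ s, χ (g i) := by
  induction s using Finset.cons_induction with
  | empty => simp [chi_zero]
  | cons a s h ih => simp [Finset.sum_cons, Finset.prod_cons, chi_add, ih]

def cfun {n r : ℕ} (a x : Fin r → (Fin n → ZMod 2)) (p : Fin n → ZMod 2) : ZMod 2 :=
  ∑ i, ((if x i = p then 1 else 0) + (if x i + a i = p then 1 else 0))

lemma prod_eq_chi {n r : ℕ} (a x : Fin r → (Fin n → ZMod 2))
    (f : (Fin n → ZMod 2) → ZMod 2) :
    (∏ i, (-1 : ℝ) ^ (f (x i)).val * (-1 : ℝ) ^ (f (x i + a i)).val)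
      = χ (∑ p, cfun a x p * f p) := by
  have h1 : ∑ p, cfun a x p * f p = ∑ i, (f (x i) + f (x i + a i)) := by
    unfold cfun
    simp only [Finset.sum_mul]
    rw [Finset.sum_comm]
    refine Finset.sum_congr rfl fun i _ => ?_
    simp only [add_mul, ite_mul, one_mul, zero_mul, Finset.sum_add_distrib]
    rw [Finset.sum_ite_eq Finset.univ (x i) f, Finset.sum_ite_eq Finset.univ (x i + a i) f]
    simp
  rw [h1, chi_sum]
  refine Finset.prod_congr rfl fun i _ => ?_
  rw [chi_add]
  rfl

lemma ev_eq {n r : ℕ} (a x : Fin r → (Fin n → ZMod 2)) :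
    ev n (fun f => ∏ i, (-1 : ℝ) ^ (f (x i)).val * (-1 : ℝ) ^ (f (x i + a i)).val)
      = if ∀ p, cfun a x p = 0 then 1 else 0 := by
  unfold ev
  have hcard : (0 : ℝ) < Fintype.card ((Fin n → ZMod 2) → ZMod 2) := by
    exact_mod_cast Fintype.card_pos
  simp only [prod_eq_chi a x]
  split_ifs with h
  · have : ∀ f : (Fin n → ZMod 2) → ZMod 2, χ (∑ p, cfun a x p * f p) = 1 := by
      intro f; simp [h, chi_zero]
    simp only [this, Finset.sum_const, Finset.card_univ, nsmul_eq_mul, mul_one]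
    field_simp
  · push_neg at h
    obtain ⟨p0, hp0⟩ := h
    have hone : cfun a x p0 = 1 := by
      have : ∀ v : ZMod 2, v ≠ 0 → v = 1 := by decide
      exact this _ hp0
    set δ : (Fin n → ZMod 2) → ZMod 2 := fun q => if p0 = q then 1 else 0 with hδ
    have key : ∀ f, χ (∑ p, cfun a x p * (f + δ) p) = - χ (∑ p, cfun a x p * f p) := by
      intro f
      have : ∑ p, cfun a x p * (f + δ) p = (∑ p, cfun a x p * f p) + 1 := by
        simp only [Pi.add_apply, mul_add, Finset.sum_add_distrib]
        congr 1
        simp only [hδ, mul_ite, mul_one, mul_zero]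
        rw [Finset.sum_ite_eq Finset.univ p0 (cfun a x)]
        simp [hone]
      rw [this, chi_ne]
    have hzero : (∑ f : (Fin n → ZMod 2) → ZMod 2, χ (∑ p, cfun a x p * f p)) = 0 := by
      set S := ∑ f : (Fin n → ZMod 2) → ZMod 2, χ (∑ p, cfun a x p * f p) with hS
      have hEq : S = ∑ f : (Fin n → ZMod 2) → ZMod 2, χ (∑ p, cfun a x p * (f + δ) p) :=
        (Fintype.sum_equiv (Equiv.addRight δ) _ _ fun f => rfl).symm
      have hneg : S = -S := by
        conv_lhs => rw [hEq, Finset.sum_congr rfl fun f _ => key f, Finset.sum_neg_distrib]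
      linarith
    rw [hzero, zero_div]

def Sfin {n r : ℕ} (a : Fin r → (Fin n → ZMod 2)) : Finset (Fin r → (Fin n → ZMod 2)) :=
  Finset.univ.filter (fun x => ∀ p, cfun a x p = 0)

lemma Efun_eq {n r : ℕ} (a : Fin r → (Fin n → ZMod 2)) :
    Efun n a = ((Sfin a).card : ℝ) := by
  unfold Efun Sfin
  rw [Finset.sum_congr rfl fun x _ => ev_eq a x]
  rw [Finset.sum_boole]

lemma vadd_cancel {n : ℕ} (u v : Fin n → ZMod 2) : u + v + v = u := by
  funext k
  have : ∀ a b : ZMod 2, a + b + b = a := by decide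
  exact this (u k) (v k)

lemma key_exists {n r : ℕ} (a0 : Fin n → ZMod 2) (ha0 : a0 ≠ 0)
    (a : Fin r → (Fin n → ZMod 2)) (x : Fin (r + 1) → (Fin n → ZMod 2))
    (hx : ∀ p, cfun (Fin.cons a0 a) x p = 0) :
    ∃ i : Fin r, x i.succ = x 0 ∨ x i.succ + a i = x 0 := by
  by_contra h
  push_neg at h
  have h0 := hx (x 0)
  unfold cfun at h0
  rw [Fin.sum_univ_succ] at h0
  have hne : x 0 + a0 ≠ x 0 := by
    intro hcon
    apply ha0
    have := congrArg (fun w => w + a0) hcon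
    simpa [vadd_cancel] using hcon
  have hfirst : ((if x 0 = x 0 then (1 : ZMod 2) else 0)
      + (if x 0 + (Fin.cons a0 a : Fin (r+1) → (Fin n → ZMod 2)) 0 = x 0 then 1 else 0)) = 1 := by
    simp [Fin.cons_zero, hne]
  have hrest : ∀ i : Fin r, ((if x i.succ = x 0 then (1 : ZMod 2) else 0)
      + (if x i.succ + (Fin.cons a0 a : Fin (r+1) → (Fin n → ZMod 2)) i.succ = x 0 then 1 else 0)) = 0 := by
    intro i
    simp [Fin.cons_succ, (h i).1, (h i).2]
  rw [hfirst] at h0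
  rw [Finset.sum_congr rfl fun i _ => hrest i] at h0
  simp at h0

lemma transfer1 {n r : ℕ} (a0 : Fin n → ZMod 2) (a : Fin r → (Fin n → ZMod 2))
    (x : Fin (r + 1) → (Fin n → ZMod 2)) (i : Fin r)
    (hx : ∀ p, cfun (Fin.cons a0 a) x p = 0) (hi : x i.succ = x 0) :
    ∀ p, cfun (Function.update a i (a i + a0))
      (Function.update (fun j => x j.succ) i (x 0 + a0)) p = 0 := by
  intro p
  have h0 := hx p
  unfold cfun at h0 ⊢
  rw [Fin.sum_univ_succ] at h0
  simp only [Fin.cons_zero, Fin.cons_succ] at h0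
  rw [← Finset.sum_erase_add _ _ (Finset.mem_univ i)] at h0 ⊢
  have hers : (∑ j ∈ Finset.univ.erase i,
      ((if Function.update (fun j => x j.succ) i (x 0 + a0) j = p then (1 : ZMod 2) else 0)
        + (if Function.update (fun j => x j.succ) i (x 0 + a0) j
            + Function.update a i (a i + a0) j = p then 1 else 0)))
      = ∑ j ∈ Finset.univ.erase i,
      ((if x j.succ = p then (1 : ZMod 2) else 0)
        + (if x j.succ + a j = p then 1 else 0)) := by
    refine Finset.sum_congr rfl fun j hj => ?_
    have hji : j ≠ i := Finset.ne_of_mem_erase hj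
    simp [Function.update_of_ne hji]
  rw [hers]
  have hv : x 0 + a0 + (a i + a0) = x 0 + a i := by
    funext k
    have h2 : ∀ u v w : ZMod 2, u + v + (w + v) = u + w := by decide
    simpa using h2 (x 0 k) (a0 k) (a i k)
  have hTi : ((if Function.update (fun j => x j.succ) i (x 0 + a0) i = p then (1 : ZMod 2) else 0)
      + (if Function.update (fun j => x j.succ) i (x 0 + a0) i
          + Function.update a i (a i + a0) i = p then 1 else 0))
      = ((if x 0 = p then (1 : ZMod 2) else 0) + (if x 0 + a0 = p then 1 else 0))
        + ((if x i.succ = p then (1 : ZMod 2) else 0) + (if x i.succ + a i = p then 1 else 0)) := by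
    simp only [Function.update_self, hv, hi]
    have h3 : ∀ u v w : ZMod 2, v + w = (u + v) + (u + w) := by decide
    exact h3 _ _ _
  linear_combination h0 + hTi

lemma transfer2 {n r : ℕ} (a0 : Fin n → ZMod 2) (a : Fin r → (Fin n → ZMod 2))
    (x : Fin (r + 1) → (Fin n → ZMod 2)) (i : Fin r)
    (hx : ∀ p, cfun (Fin.cons a0 a) x p = 0) (hi : x i.succ + a i = x 0) :
    ∀ p, cfun (Function.update a i (a i + a0)) (fun j => x j.succ) p = 0 := by
  intro p
  have h0 := hx p
  unfold cfun at h0 ⊢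
  rw [Fin.sum_univ_succ] at h0
  simp only [Fin.cons_zero, Fin.cons_succ] at h0
  rw [← Finset.sum_erase_add _ _ (Finset.mem_univ i)] at h0 ⊢
  have hers : (∑ j ∈ Finset.univ.erase i,
      ((if x j.succ = p then (1 : ZMod 2) else 0)
        + (if x j.succ + Function.update a i (a i + a0) j = p then 1 else 0)))
      = ∑ j ∈ Finset.univ.erase i,
      ((if x j.succ = p then (1 : ZMod 2) else 0)
        + (if x j.succ + a j = p then 1 else 0)) := by
    refine Finset.sum_congr rfl fun j hj => ?_
    have hji : j ≠ i := Finset.ne_of_mem_erase hj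
    simp [Function.update_of_ne hji]
  rw [hers]
  have hv : x i.succ + (a i + a0) = x 0 + a0 := by
    rw [← add_assoc, hi]
  have hTi : ((if x i.succ = p then (1 : ZMod 2) else 0)
      + (if x i.succ + Function.update a i (a i + a0) i = p then 1 else 0))
      = ((if x 0 = p then (1 : ZMod 2) else 0) + (if x 0 + a0 = p then 1 else 0))
        + ((if x i.succ = p then (1 : ZMod 2) else 0) + (if x i.succ + a i = p then 1 else 0)) := by
    simp only [Function.update_self, hv, hi]
    have h3 : ∀ u v w : ZMod 2, w + v = (u + v) + (w + u) := by decide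
    exact h3 _ _ _
  linear_combination h0 + hTi

lemma cons_tail' {n r : ℕ} (x : Fin (r + 1) → (Fin n → ZMod 2)) :
    Fin.cons (x 0) (fun j => x j.succ) = x := by
  funext k
  cases k using Fin.cases <;> simp

noncomputable def Phi {n r : ℕ} (a0 : Fin n → ZMod 2) (a : Fin r → (Fin n → ZMod 2))
    (x : Fin (r + 1) → (Fin n → ZMod 2)) : Option (Fin r × Bool × (Fin r → (Fin n → ZMod 2))) :=
  if h : ∃ i : Fin r, x i.succ = x 0 ∨ x i.succ + a i = x 0 then
    if x h.choose.succ = x 0 then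
      some (h.choose, true, Function.update (fun j => x j.succ) h.choose (x 0 + a0))
    else some (h.choose, false, fun j => x j.succ)
  else none

def Psi {n r : ℕ} (a0 : Fin n → ZMod 2) (a : Fin r → (Fin n → ZMod 2)) :
    Option (Fin r × Bool × (Fin r → (Fin n → ZMod 2))) → (Fin (r + 1) → (Fin n → ZMod 2))
  | none => fun _ => 0
  | some (i, true, y) => Fin.cons (y i + a0) (Function.update y i (y i + a0))
  | some (i, false, y) => Fin.cons (y i + a i) y

lemma recover {n r : ℕ} (a0 : Fin n → ZMod 2) (a : Fin r → (Fin n → ZMod 2))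
    (x : Fin (r + 1) → (Fin n → ZMod 2))
    (h : ∃ i : Fin r, x i.succ = x 0 ∨ x i.succ + a i = x 0) :
    Psi a0 a (Phi a0 a x) = x := by
  unfold Phi
  rw [dif_pos h]
  set i := h.choose with hidef
  by_cases hc : x i.succ = x 0
  · rw [if_pos hc]
    show Fin.cons _ _ = x
    have hyi : Function.update (fun j => x j.succ) i (x 0 + a0) i = x 0 + a0 :=
      Function.update_self _ _ _
    rw [hyi]
    rw [vadd_cancel (x 0) a0]
    have : Function.update (Function.update (fun j => x j.succ) i (x 0 + a0)) i (x 0)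
        = fun j => x j.succ := by
      rw [Function.update_idem]
      rw [← hc]
      exact Function.update_eq_self i _
    rw [this]
    exact cons_tail' x
  · rw [if_neg hc]
    show Fin.cons _ _ = x
    have hc2 : x i.succ + a i = x 0 := (h.choose_spec).resolve_left hc
    rw [hc2]
    exact cons_tail' x

lemma card_le {n r : ℕ} (a0 : Fin n → ZMod 2) (ha0 : a0 ≠ 0)
    (a : Fin r → (Fin n → ZMod 2)) :
    (Sfin (Fin.cons a0 a)).card
      ≤ ∑ i : Fin r, 2 * (Sfin (Function.update a i (a i + a0))).card := by
  classical
  set B : Finset (Option (Fin r × Bool × (Fin r → (Fin n → ZMod 2)))) :=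
    Finset.univ.biUnion (fun q : Fin r × Bool =>
      (Sfin (Function.update a q.1 (a q.1 + a0))).image (fun y => some (q.1, q.2, y))) with hB
  have hmem : ∀ x, x ∈ Sfin (Fin.cons a0 a) → ∀ p, cfun (Fin.cons a0 a) x p = 0 := by
    intro x hx
    exact (Finset.mem_filter.mp hx).2
  have hmaps : ∀ x ∈ Sfin (Fin.cons a0 a), Phi a0 a x ∈ B := by
    intro x hx
    have hx' := hmem x hx
    have h := key_exists a0 ha0 a x hx'
    rw [hB, Finset.mem_biUnion]
    unfold Phi
    rw [dif_pos h]
    set i := h.choose with hidef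
    by_cases hc : x i.succ = x 0
    · refine ⟨(i, true), Finset.mem_univ _, ?_⟩
      rw [if_pos hc, Finset.mem_image]
      refine ⟨_, ?_, rfl⟩
      exact Finset.mem_filter.mpr ⟨Finset.mem_univ _, transfer1 a0 a x i hx' hc⟩
    · refine ⟨(i, false), Finset.mem_univ _, ?_⟩
      rw [if_neg hc, Finset.mem_image]
      refine ⟨_, ?_, rfl⟩
      have hc2 : x i.succ + a i = x 0 := (h.choose_spec).resolve_left hc
      exact Finset.mem_filter.mpr ⟨Finset.mem_univ _, transfer2 a0 a x i hx' hc2⟩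
  have hinj : Set.InjOn (Phi a0 a) (Sfin (Fin.cons a0 a) : Set (Fin (r + 1) → (Fin n → ZMod 2))) := by
    intro x1 hx1 x2 hx2 heq
    have h1 := key_exists a0 ha0 a x1 (hmem x1 (Finset.mem_coe.mp hx1))
    have h2 := key_exists a0 ha0 a x2 (hmem x2 (Finset.mem_coe.mp hx2))
    calc x1 = Psi a0 a (Phi a0 a x1) := (recover a0 a x1 h1).symm
      _ = Psi a0 a (Phi a0 a x2) := by rw [heq]
      _ = x2 := recover a0 a x2 h2
  calc (Sfin (Fin.cons a0 a)).card ≤ B.card :=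
        Finset.card_le_card_of_injOn (Phi a0 a) hmaps hinj
    _ ≤ ∑ q : Fin r × Bool,
          ((Sfin (Function.update a q.1 (a q.1 + a0))).image
            (fun y => some (q.1, q.2, y))).card := Finset.card_biUnion_le
    _ ≤ ∑ q : Fin r × Bool, (Sfin (Function.update a q.1 (a q.1 + a0))).card :=
        Finset.sum_le_sum fun q _ => Finset.card_image_le
    _ = ∑ i : Fin r, 2 * (Sfin (Function.update a i (a i + a0))).card := by
        rw [Fintype.sum_prod_type]
        refine Finset.sum_congr rfl fun i _ => ?_
        simp [two_mul]

theorem stmt6 (n r : ℕ) (a0 : Fin n → ZMod 2) (ha0 : a0 ≠ 0)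
    (a : Fin r → (Fin n → ZMod 2)) :
    Efun n (Fin.cons a0 a) ≤ 2 * ∑ i : Fin r, Efun n (Function.update a i (a i + a0)) := by
  rw [Efun_eq, Finset.sum_congr rfl fun i (_ : i ∈ Finset.univ) => Efun_eq (Function.update a i (a i + a0))]
  have hcl := card_le a0 ha0 a
  calc ((Sfin (Fin.cons a0 a)).card : ℝ)
      ≤ ((∑ i : Fin r, 2 * (Sfin (Function.update a i (a i + a0))).card : ℕ) : ℝ) := by
        exact_mod_cast hcl
    _ = 2 * ∑ i : Fin r, ((Sfin (Function.update a i (a i + a0))).card : ℝ) := by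
        push_cast
        rw [Finset.mul_sum]
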